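/- arXiv:1912.03979 — 5 statements merged into one kernel-verified Lean document; each statement's English description precedes it below -/
import Mathlib

section
/- Let $c_0, c_1, \dots, c_d$ and $a_1, \dots, a_d$ be complex numbers such that $c_0, c_1, \dots, c_d, a_1, \dots, a_d$ are pairwise distinct. Then $\frac{\prod_{j=1}^d (c_0 - a_j)}{\prod_{j=1}^d (c_0 - c_j)} + \sum_{k=1}^d \frac{\prod_{j=1}^d (c_k - a_j)}{(c_k - c_0)\prod_{j=1, j\neq k}^d (c_k - c_j)} = 1$. -/
open Finset

/-- The key partial fraction identity: for pairwise distinct complex numbers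
`c₀, c₁, …, c_d, a₁, …, a_d`,
`∏ⱼ(c₀-aⱼ)/∏ⱼ(c₀-cⱼ) + ∑ₖ ∏ⱼ(cₖ-aⱼ)/((cₖ-c₀)∏_{j≠k}(cₖ-cⱼ)) = 1`. -/
theorem partial_fraction_identity (d : ℕ) (c₀ : ℂ) (c a : Fin d → ℂ)
    (hdist : Function.Injective (Sum.elim (Fin.cons c₀ c : Fin (d + 1) → ℂ) a)) :
    (∏ j, (c₀ - a j)) / (∏ j, (c₀ - c j))
      + ∑ k, (∏ j, (c k - a j)) / ((c k - c₀) * ∏ j ∈ univ.erase k, (c k - c j)) = 1 := by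
  classical
  set v : Fin (d + 1) → ℂ := Fin.cons c₀ c with hv
  have hvinj : Function.Injective v := fun i j h => by
    have := hdist (a₁ := Sum.inl i) (a₂ := Sum.inl j) h
    exact Sum.inl.inj this
  have hvs : Set.InjOn v (univ : Finset (Fin (d + 1))) := hvinj.injOn
  set f : Polynomial ℂ := Lagrange.nodal univ a with hf
  have hfdeg : f.degree < ((univ : Finset (Fin (d + 1))).card : WithBot ℕ) := by
    rw [hf, Lagrange.degree_nodal]
    simp only [card_univ, Fintype.card_fin]
    exact_mod_cast Nat.lt_succ_self d
  have hinterp := Lagrange.eq_interpolate hvs hfdeg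
  have hcoeff := congrArg (fun p => Polynomial.coeff p d) hinterp
  simp only [Lagrange.interpolate_apply, Polynomial.finset_sum_coeff,
    Polynomial.coeff_C_mul] at hcoeff
  have hfc : f.coeff d = 1 := by
    have hnd : f.natDegree = d := by
      rw [hf, Lagrange.natDegree_nodal, card_univ, Fintype.card_fin]
    rw [← hnd]
    exact (Lagrange.nodal_monic).coeff_natDegree
  have hbasis : ∀ i : Fin (d + 1),
      (Lagrange.basis univ v i).coeff d = ∏ j ∈ univ.erase i, (v i - v j)⁻¹ := by
    intro i
    have hnd : (Lagrange.basis univ v i).natDegree = d := by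
      rw [Lagrange.natDegree_basis hvs (mem_univ i), card_univ, Fintype.card_fin]
      omega
    have hlc := Polynomial.coeff_natDegree (p := Lagrange.basis univ v i)
    rw [hnd] at hlc
    rw [hlc, Lagrange.basis, Polynomial.leadingCoeff_prod]
    refine prod_congr rfl fun j hj => ?_
    rw [Lagrange.basisDivisor, Polynomial.leadingCoeff_mul, Polynomial.leadingCoeff_C,
      (Polynomial.monic_X_sub_C _).leadingCoeff, mul_one]
  simp only [hbasis, hfc, hf, Lagrange.eval_nodal] at hcoeff
  -- hcoeff : 1 = ∑ i, (∏ j, (v i - a j)) * ∏ j ∈ univ.erase i, (v i - v j)⁻¹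
  rw [Fin.sum_univ_succ] at hcoeff
  set e : Fin d ↪ Fin (d + 1) := ⟨Fin.succ, Fin.succ_injective d⟩ with he
  have h0 : (univ : Finset (Fin (d + 1))).erase 0 = univ.map e := by
    rw [Fin.univ_succ, erase_cons]
  have hkset : ∀ k : Fin d, (univ : Finset (Fin (d + 1))).erase (e k)
      = insert 0 ((univ.erase k).map e) := by
    intro k
    ext x
    simp only [Fin.univ_succ, cons_eq_insert, he, mem_erase, mem_insert, mem_map,
      Function.Embedding.coeFn_mk, mem_univ, and_true, true_and]
    cases x using Fin.cases with
    | zero => simp [(Fin.succ_ne_zero k).symm]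
    | succ j => simp [Fin.succ_ne_zero, Fin.succ_inj]
  have hterm0 : (∏ j, (v 0 - a j)) * ∏ j ∈ univ.erase (0 : Fin (d + 1)), (v 0 - v j)⁻¹
      = (∏ j, (c₀ - a j)) / (∏ j, (c₀ - c j)) := by
    rw [h0, prod_map]
    simp only [hv, Fin.cons_zero, Fin.cons_succ, he, Function.Embedding.coeFn_mk,
      div_eq_mul_inv, prod_inv_distrib]
  have htermk : ∀ k : Fin d,
      (∏ j, (v (Fin.succ k) - a j)) * ∏ j ∈ univ.erase (Fin.succ k), (v (Fin.succ k) - v j)⁻¹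
      = (∏ j, (c k - a j)) / ((c k - c₀) * ∏ j ∈ univ.erase k, (c k - c j)) := by
    intro k
    have h0n : (0 : Fin (d + 1)) ∉ (univ.erase k).map e := by
      simp [he, Fin.succ_ne_zero]
    rw [show Fin.succ k = e k from rfl, hkset k, prod_insert h0n, prod_map]
    simp only [hv, Fin.cons_zero, Fin.cons_succ, he, Function.Embedding.coeFn_mk,
      div_eq_mul_inv, prod_inv_distrib, mul_inv]
  rw [hterm0] at hcoeff
  simp only [htermk] at hcoeff
  exact hcoeff.symm.trans hfc
end

section
/- Let $\lambda > 0$, $N>0$, $\varepsilon_1,\dots,\varepsilon_d$ distinct positive reals and $\varrho_1,\dots,\varrho_d$ positive reals, and $R(z) = z - \frac{\lambda}{N}\sum_{k=1}^d \frac{\varrho_k}{\varepsilon_k+z}$. Then the odd rational function $\tilde R(z) = R(z) - R(-z)$ has exactly $2d+1$ distinct real zeros, of the form $\{0, \pm\alpha_1, \dots, \pm\alpha_d\}$ with $\alpha_k > 0$ pairwise distinct, and satisfies the factorization $R(z) - R(-z) = 2z \prod_{k=1}^d \frac{z^2 - \alpha_k^2}{z^2 - \varepsilon_k^2}$ as rational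 functions. -/
open Finset Filter Polynomial Topology

noncomputable def gfun {d : ℕ} (c : ℝ) (e ϱ : Fin d → ℝ) : ℝ → ℝ :=
  fun t => 1 - c * ∑ k, ϱ k / (t - e k)

section helper

variable {d : ℕ} {c : ℝ} {e ϱ : Fin d → ℝ}

lemma sum_tendsto_atTop (hϱ : ∀ k, 0 < ϱ k) (he : Function.Injective e) (k0 : Fin d) :
    Tendsto (fun t => ∑ k, ϱ k / (t - e k)) (𝓝[>] (e k0)) atTop := by
  have hsub : Tendsto (fun t => t - e k0) (𝓝[>] (e k0)) (𝓝[>] 0) := by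
    apply tendsto_nhdsWithin_of_tendsto_nhds_of_eventually_within
    · exact ((continuous_id.sub continuous_const).tendsto' _ _ (by simp)).mono_left
        nhdsWithin_le_nhds
    · filter_upwards [self_mem_nhdsWithin] with t ht
      exact sub_pos.2 (Set.mem_Ioi.1 ht)
  have h1 : Tendsto (fun t => ϱ k0 * (t - e k0)⁻¹) (𝓝[>] (e k0)) atTop :=
    (tendsto_inv_nhdsGT_zero.comp hsub).const_mul_atTop (hϱ k0)
  have h2 : Tendsto (fun t => ∑ k ∈ univ.erase k0, ϱ k / (t - e k)) (𝓝[>] (e k0))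
      (𝓝 (∑ k ∈ univ.erase k0, ϱ k / (e k0 - e k))) := by
    apply tendsto_finset_sum
    intro k hk
    have hne : e k0 - e k ≠ 0 := sub_ne_zero_of_ne (fun h => (mem_erase.1 hk).1 (he h.symm))
    exact ((continuousAt_const.div (continuousAt_id.sub continuousAt_const)
      hne).continuousWithinAt).tendsto
  have key : Tendsto (fun t => ϱ k0 * (t - e k0)⁻¹ + ∑ k ∈ univ.erase k0, ϱ k / (t - e k))
      (𝓝[>] (e k0)) atTop := by
    apply tendsto_atTop_add_right_of_le' _ ((∑ k ∈ univ.erase k0, ϱ k / (e k0 - e k)) - 1) h1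
    filter_upwards [h2.eventually (eventually_ge_nhds (sub_one_lt _))] with t ht using ht
  refine key.congr (fun t => ?_)
  rw [← Finset.add_sum_erase univ (fun k => ϱ k / (t - e k)) (mem_univ k0), div_eq_mul_inv]

lemma sum_tendsto_atBot (hϱ : ∀ k, 0 < ϱ k) (he : Function.Injective e) (k0 : Fin d) :
    Tendsto (fun t => ∑ k, ϱ k / (t - e k)) (𝓝[<] (e k0)) atBot := by
  have hsub : Tendsto (fun t => e k0 - t) (𝓝[<] (e k0)) (𝓝[>] 0) := by
    apply tendsto_nhdsWithin_of_tendsto_nhds_of_eventually_within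
    · exact ((continuous_const.sub continuous_id).tendsto' _ _ (by simp)).mono_left
        nhdsWithin_le_nhds
    · filter_upwards [self_mem_nhdsWithin] with t ht
      exact sub_pos.2 (Set.mem_Iio.1 ht)
  have h1 : Tendsto (fun t => ϱ k0 * (t - e k0)⁻¹) (𝓝[<] (e k0)) atBot := by
    have := ((tendsto_inv_nhdsGT_zero.comp hsub).const_mul_atTop (hϱ k0))
    have h2 := tendsto_neg_atTop_atBot.comp this
    refine h2.congr (fun t => ?_)
    simp only [Function.comp_apply]
    rw [← mul_neg, ← inv_neg, neg_sub]
  have h2 : Tendsto (fun t => ∑ k ∈ univ.erase k0, ϱ k / (t - e k)) (𝓝[<] (e k0))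
      (𝓝 (∑ k ∈ univ.erase k0, ϱ k / (e k0 - e k))) := by
    apply tendsto_finset_sum
    intro k hk
    have hne : e k0 - e k ≠ 0 := sub_ne_zero_of_ne (fun h => (mem_erase.1 hk).1 (he h.symm))
    exact ((continuousAt_const.div (continuousAt_id.sub continuousAt_const)
      hne).continuousWithinAt).tendsto
  have key : Tendsto (fun t => ϱ k0 * (t - e k0)⁻¹ + ∑ k ∈ univ.erase k0, ϱ k / (t - e k))
      (𝓝[<] (e k0)) atBot := by
    apply tendsto_atBot_add_right_of_ge' _ ((∑ k ∈ univ.erase k0, ϱ k / (e k0 - e k)) + 1) h1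
    filter_upwards [h2.eventually (eventually_le_nhds (lt_add_one _))] with t ht using ht
  refine key.congr (fun t => ?_)
  rw [← Finset.add_sum_erase univ (fun k => ϱ k / (t - e k)) (mem_univ k0), div_eq_mul_inv]

lemma gfun_tendsto_atBot (hc : 0 < c) (hϱ : ∀ k, 0 < ϱ k) (he : Function.Injective e)
    (k0 : Fin d) : Tendsto (gfun c e ϱ) (𝓝[>] (e k0)) atBot := by
  have h := ((sum_tendsto_atTop hϱ he k0).const_mul_atTop hc)
  have h2 := tendsto_atBot_add_const_left _ 1 (tendsto_neg_atTop_atBot.comp h)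
  exact h2.congr (fun t => by simp [gfun, sub_eq_add_neg])

lemma gfun_tendsto_atTop (hc : 0 < c) (hϱ : ∀ k, 0 < ϱ k) (he : Function.Injective e)
    (k0 : Fin d) : Tendsto (gfun c e ϱ) (𝓝[<] (e k0)) atTop := by
  have h := ((sum_tendsto_atBot hϱ he k0).const_mul_atBot hc)
  have h2 := tendsto_atTop_add_const_left _ 1 (tendsto_neg_atBot_atTop.comp h)
  exact h2.congr (fun t => by simp [gfun, sub_eq_add_neg])

lemma gfun_pos_of_ge (hc : 0 < c) (hϱ : ∀ k, 0 < ϱ k) {B : ℝ}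
    (hB : ∀ k, e k + 2 * c * (∑ j, ϱ j) + 1 ≤ B) {t : ℝ} (ht : B ≤ t) :
    0 < gfun c e ϱ t := by
  set D : ℝ := 2 * c * (∑ j, ϱ j) + 1 with hD
  have hsum : 0 ≤ ∑ j, ϱ j := Finset.sum_nonneg (fun j _ => (hϱ j).le)
  have hDpos : 0 < D := by positivity
  have hle : ∑ k, ϱ k / (t - e k) ≤ (∑ k, ϱ k) / D := by
    rw [Finset.sum_div]
    apply Finset.sum_le_sum
    intro k _
    have h1 : D ≤ t - e k := by linarith [hB k]
    exact div_le_div_of_nonneg_left (hϱ k).le hDpos h1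
  have h2 : c * ((∑ k, ϱ k) / D) < 1 := by
    rw [mul_div_assoc' , div_lt_one hDpos]
    nlinarith
  have h3 : c * (∑ k, ϱ k / (t - e k)) ≤ c * ((∑ k, ϱ k) / D) :=
    mul_le_mul_of_nonneg_left hle hc.le
  simp only [gfun]; linarith


lemma gfun_continuousOn : ContinuousOn (gfun c e ϱ) {t | ∀ k, t ≠ e k} := by
  apply ContinuousOn.sub continuousOn_const
  apply ContinuousOn.mul continuousOn_const
  apply continuousOn_finset_sum
  intro k _
  exact ContinuousOn.div continuousOn_const
    (by fun_prop) (fun t ht => sub_ne_zero_of_ne (ht k))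

lemma gfun_prod_eq (hc : 0 < c) (hϱ : ∀ k, 0 < ϱ k) {w : Fin d → ℝ}
    (hwinj : Function.Injective w) (hwne : ∀ k j, w k ≠ e j)
    (hwroot : ∀ k, gfun c e ϱ (w k) = 0) :
    ∀ t : ℝ, (∀ j, t ≠ e j) → gfun c e ϱ t = ∏ k, (t - w k) / (t - e k) := by
  classical
  set P : ℝ[X] := (∏ k, (X - C (e k))) - C c * ∑ k, C (ϱ k) * ∏ j ∈ univ.erase k, (X - C (e j))
    with hP
  set Q : ℝ[X] := ∏ k, (X - C (w k)) with hQ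
  have hPeval : ∀ t : ℝ, (∀ j, t ≠ e j) →
      P.eval t = (gfun c e ϱ t) * ∏ j, (t - e j) := by
    intro t ht
    have hne : ∀ j, t - e j ≠ 0 := fun j => sub_ne_zero_of_ne (ht j)
    simp only [hP, eval_sub, eval_mul, eval_prod, eval_finset_sum, eval_C, eval_X, gfun]
    rw [sub_mul, one_mul]
    congr 1
    rw [mul_assoc]
    congr 1
    rw [Finset.sum_mul]
    apply Finset.sum_congr rfl
    intro k _
    rw [← Finset.mul_prod_erase univ (fun j => t - e j) (mem_univ k)]
    field_simp
    rw [mul_div_cancel_right₀ _ (hne k)]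
  -- degrees
  have hbigdeg : ((∏ k, (X - C (e k)) : ℝ[X])).degree = (d : ℕ) := by
    rw [degree_prod]
    simp [degree_X_sub_C]
  have hbigmonic : ((∏ k, (X - C (e k)) : ℝ[X])).Monic :=
    monic_prod_of_monic _ _ (fun k _ => monic_X_sub_C _)
  have hsmalldeg : (C c * ∑ k, C (ϱ k) * ∏ j ∈ univ.erase k, (X - C (e j)) : ℝ[X]).degree
      < (d : ℕ) := by
    rw [degree_C_mul (ne_of_gt hc)]
    apply lt_of_le_of_lt (degree_sum_le _ _)
    rw [Finset.sup_lt_iff (by exact_mod_cast WithBot.bot_lt_coe (d : ℕ))]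
    intro k _
    rw [degree_C_mul (ne_of_gt (hϱ k)), degree_prod]
    simp only [degree_X_sub_C, Finset.sum_const, card_erase_of_mem (mem_univ k), card_univ,
      Fintype.card_fin, nsmul_eq_mul, mul_one]
    exact_mod_cast WithBot.coe_lt_coe.2 (Nat.sub_lt_of_pos_le (by norm_num) (by
      rcases Nat.eq_zero_or_pos d with h | h
      · exact absurd k.2 (by omega)
      · omega))
  have hPmonic : P.Monic := by
    rw [hP, sub_eq_add_neg]
    exact hbigmonic.add_of_left (by rw [degree_neg, hbigdeg]; exact hsmalldeg)
  have hPdeg : P.degree = (d : ℕ) := by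
    rw [hP, ← hbigdeg]
    exact degree_sub_eq_left_of_degree_lt (by rwa [hbigdeg])
  have hQmonic : Q.Monic := monic_prod_of_monic _ _ (fun k _ => monic_X_sub_C _)
  have hQdeg : Q.degree = (d : ℕ) := by
    rw [hQ, degree_prod]
    simp [degree_X_sub_C]
  have hProots : ∀ k, P.eval (w k) = 0 := by
    intro k
    rw [hPeval (w k) (hwne k), hwroot k, zero_mul]
  have hQroots : ∀ k, Q.eval (w k) = 0 := by
    intro k
    rw [hQ, eval_prod]
    exact Finset.prod_eq_zero (mem_univ k) (by simp)
  have hPQ : P = Q := by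
    have hzero : P - Q = 0 := by
      by_contra hz
      have hdlt : (P - Q).degree < P.degree :=
        degree_sub_lt (by rw [hPdeg, hQdeg]) hPmonic.ne_zero
          (by rw [hPmonic.leadingCoeff, hQmonic.leadingCoeff])
      have hnat : (P - Q).natDegree < d :=
        (natDegree_lt_iff_degree_lt hz).2 (by rwa [hPdeg] at hdlt)
      exact hz (Polynomial.eq_zero_of_natDegree_lt_card_of_eval_eq_zero _ hwinj
        (fun k => by rw [eval_sub, hProots k, hQroots k, sub_zero])
        (by simpa [Fintype.card_fin] using hnat))
    exact sub_eq_zero.1 hzero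
  intro t ht
  have hne : ∀ j, t - e j ≠ 0 := fun j => sub_ne_zero_of_ne (ht j)
  have hprodne : (∏ j, (t - e j)) ≠ 0 := Finset.prod_ne_zero_iff.2 (fun j _ => hne j)
  have h1 : (gfun c e ϱ t) * ∏ j, (t - e j) = ∏ k, (t - w k) := by
    rw [← hPeval t ht, hPQ, hQ, eval_prod]
    simp
  rw [Finset.prod_div_distrib, ← h1, mul_div_assoc, div_self hprodne, mul_one]


lemma exists_w (hc : 0 < c) (he : Function.Injective e) (hepos : ∀ k, 0 < e k)
    (hϱ : ∀ k, 0 < ϱ k) :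
    ∃ w : Fin d → ℝ, (∀ k, 0 < w k) ∧ Function.Injective w ∧ (∀ k j, w k ≠ e j) ∧
      (∀ k, gfun c e ϱ (w k) = 0) := by
  classical
  rcases Nat.eq_zero_or_pos d with rfl | hd
  · exact ⟨Fin.elim0, fun k => k.elim0, fun k => k.elim0, fun k => k.elim0, fun k => k.elim0⟩
  set E : Finset ℝ := univ.image e with hE
  have hcard : E.card = d := by
    rw [hE, Finset.card_image_of_injective _ he, card_univ, Fintype.card_fin]
  set v : Fin d → ℝ := fun i => ((E.orderIsoOfFin hcard) i : ℝ) with hv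
  have hvmono : StrictMono v := fun i j hij => by
    exact_mod_cast (OrderIso.lt_iff_lt (E.orderIsoOfFin hcard)).2 hij
  have hvk : ∀ i, ∃ k, v i = e k := by
    intro i
    have : (v i) ∈ E := ((E.orderIsoOfFin hcard) i).2
    rw [hE] at this
    simp only [mem_image, mem_univ, true_and] at this
    obtain ⟨k, hk⟩ := this
    exact ⟨k, hk.symm⟩
  have hkv : ∀ k, ∃ i, v i = e k := by
    intro k
    obtain ⟨i, hi⟩ := (E.orderIsoOfFin hcard).surjective ⟨e k, by simp [hE]⟩
    exact ⟨i, congrArg Subtype.val hi⟩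
  have key : ∀ i : Fin d, ∃ t, v i < t ∧
      (∀ h : (i : ℕ) + 1 < d, t < v ⟨(i : ℕ) + 1, h⟩) ∧
      gfun c e ϱ t = 0 := by
    intro i
    obtain ⟨k0, hk0⟩ := hvk i
    have hbot : Tendsto (gfun c e ϱ) (𝓝[>] (v i)) atBot := by
      rw [hk0]; exact gfun_tendsto_atBot hc hϱ he k0
    set X : ℝ := if h : (i : ℕ) + 1 < d then v ⟨(i : ℕ) + 1, h⟩ else v i + 1 with hX
    have hXgt : v i < X := by
      rw [hX]; split_ifs with h
      · exact hvmono (by simp [Fin.lt_def])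
      · linarith
    have hIoo : Set.Ioo (v i) X ∈ 𝓝[>] (v i) := Ioo_mem_nhdsGT_of_mem ⟨le_refl _, hXgt⟩
    obtain ⟨s1, hgs1, hs1⟩ : ∃ s1, gfun c e ϱ s1 < 0 ∧ s1 ∈ Set.Ioo (v i) X := by
      exact ((hbot.eventually (eventually_lt_atBot 0)).and
        (eventually_of_mem hIoo fun x hx => hx)).exists
    by_cases hlast : (i : ℕ) + 1 < d
    · -- interior component
      obtain ⟨k1, hk1⟩ := hvk ⟨(i : ℕ) + 1, hlast⟩
      have htop : Tendsto (gfun c e ϱ) (𝓝[<] (v ⟨(i : ℕ) + 1, hlast⟩)) atTop := by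
        rw [hk1]; exact gfun_tendsto_atTop hc hϱ he k1
      have hXval : X = v ⟨(i : ℕ) + 1, hlast⟩ := by rw [hX, dif_pos hlast]
      have hs1X : s1 < v ⟨(i : ℕ) + 1, hlast⟩ := hXval ▸ hs1.2
      have hIoo2 : Set.Ioo s1 (v ⟨(i : ℕ) + 1, hlast⟩) ∈ 𝓝[<] (v ⟨(i : ℕ) + 1, hlast⟩) :=
        Ioo_mem_nhdsLT_of_mem ⟨hs1X, le_refl _⟩
      obtain ⟨s2, hgs2, hs2⟩ : ∃ s2, 0 < gfun c e ϱ s2 ∧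
          s2 ∈ Set.Ioo s1 (v ⟨(i : ℕ) + 1, hlast⟩) := by
        exact ((htop.eventually (eventually_gt_atTop 0)).and
          (eventually_of_mem hIoo2 fun x hx => hx)).exists
      have hsub : Set.Icc s1 s2 ⊆ {t | ∀ j, t ≠ e j} := by
        intro t ht j
        obtain ⟨m, hm⟩ := hkv j
        rw [← hm]
        rcases le_or_gt m i with hmi | hmi
        · have : v m ≤ v i := hvmono.monotone hmi
          have : v m < s1 := lt_of_le_of_lt this hs1.1
          intro hh; rw [← hh] at this; exact absurd ht.1 (not_le.2 this)
        · have hmge : v ⟨(i : ℕ) + 1, hlast⟩ ≤ v m :=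
            hvmono.monotone (by simp [Fin.le_def]; omega)
          have : s2 < v m := lt_of_lt_of_le hs2.2 hmge
          intro hh; rw [← hh] at this; exact absurd ht.2 (not_le.2 this)
      have hivt := intermediate_value_Icc (le_of_lt hs2.1)
        ((gfun_continuousOn (c := c) (e := e) (ϱ := ϱ)).mono hsub)
      have h0mem : (0 : ℝ) ∈ Set.Icc (gfun c e ϱ s1) (gfun c e ϱ s2) := ⟨hgs1.le, hgs2.le⟩
      obtain ⟨t, ht, hgt⟩ := hivt h0mem
      exact ⟨t, lt_of_lt_of_le hs1.1 ht.1,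
        fun h => lt_of_le_of_lt ht.2 hs2.2, hgt⟩
    · -- last component
      have hallle : ∀ j, e j ≤ v i := by
        intro j
        obtain ⟨m, hm⟩ := hkv j
        rw [← hm]
        exact hvmono.monotone (by rw [Fin.le_def]; have h2 := m.2; omega)
      set B : ℝ := v i + 2 * c * (∑ j, ϱ j) + 1 with hB
      have hBle : ∀ k, e k + 2 * c * (∑ j, ϱ j) + 1 ≤ B := by
        intro k; have := hallle k; rw [hB]; linarith
      set s2 : ℝ := max (s1 + 1) B with hs2def
      have hgs2 : 0 < gfun c e ϱ s2 := gfun_pos_of_ge hc hϱ hBle (le_max_right _ _)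
      have hs1s2 : s1 ≤ s2 := by
        have := le_max_left (s1 + 1) B; rw [← hs2def] at this; linarith
      have hsub : Set.Icc s1 s2 ⊆ {t | ∀ j, t ≠ e j} := by
        intro t ht j
        have : e j < s1 := lt_of_le_of_lt (hallle j) hs1.1
        intro hh; rw [← hh] at this; exact absurd ht.1 (not_le.2 this)
      have hivt := intermediate_value_Icc hs1s2 ((gfun_continuousOn (c := c) (e := e) (ϱ := ϱ)).mono hsub)
      have h0mem : (0 : ℝ) ∈ Set.Icc (gfun c e ϱ s1) (gfun c e ϱ s2) := ⟨hgs1.le, hgs2.le⟩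
      obtain ⟨t, ht, hgt⟩ := hivt h0mem
      exact ⟨t, lt_of_lt_of_le hs1.1 ht.1, fun h => absurd h hlast, hgt⟩
  choose w hw1 hw2 hw3 using key
  have hwmono : StrictMono w := by
    intro i j hij
    have h1 : (i : ℕ) + 1 < d := by have := j.2; have := hij; rw [Fin.lt_def] at this; omega
    have h2 : w i < v ⟨(i : ℕ) + 1, h1⟩ := hw2 i h1
    have h3 : v ⟨(i : ℕ) + 1, h1⟩ ≤ v j := hvmono.monotone (by
      rw [Fin.le_def]; simp only [Fin.val_mk]
      have := Fin.lt_def.1 hij; omega)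
    exact lt_of_lt_of_le (lt_of_lt_of_le h2 h3) (le_of_lt (hw1 j))
  refine ⟨w, ?_, hwmono.injective, ?_, hw3⟩
  · intro k
    obtain ⟨k0, hk0⟩ := hvk k
    have := hw1 k
    rw [hk0] at this
    linarith [hepos k0]
  · intro k j
    obtain ⟨m, hm⟩ := hkv j
    rw [← hm]
    rcases le_or_gt m k with hmk | hmk
    · have : v m ≤ v k := hvmono.monotone hmk
      have := lt_of_le_of_lt this (hw1 k)
      exact (ne_of_gt this)
    · have h1 : (k : ℕ) + 1 < d := by have := m.2; rw [Fin.lt_def] at hmk; omega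
      have h2 : w k < v ⟨(k : ℕ) + 1, h1⟩ := hw2 k h1
      have h3 : v ⟨(k : ℕ) + 1, h1⟩ ≤ v m := hvmono.monotone (by
        rw [Fin.le_def]; simp only [Fin.val_mk]
        have := Fin.lt_def.1 hmk; omega)
      exact ne_of_lt (lt_of_lt_of_le h2 h3)


end helper

/-- The odd rational function `R(z) - R(-z)` has exactly `2d+1` distinct real
zeros `{0, ±α₁, …, ±α_d}` with `αₖ > 0` pairwise distinct, and one has the
factorization `R(z) - R(-z) = 2z ∏ₖ (z²-αₖ²)/(z²-εₖ²)`. -/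
theorem R_odd_part_zeros_factorization (d : ℕ) (lam N : ℝ) (hlam : 0 < lam)
    (hN : 0 < N) (ε ϱ : Fin d → ℝ) (hεpos : ∀ k, 0 < ε k)
    (hεinj : Function.Injective ε) (hϱ : ∀ k, 0 < ϱ k) :
    let R : ℝ → ℝ := fun z => z - lam / N * ∑ k, ϱ k / (ε k + z)
    ∃ α : Fin d → ℝ, (∀ k, 0 < α k) ∧ Function.Injective α ∧
      {z : ℝ | (∀ k, z ≠ ε k ∧ z ≠ -ε k) ∧ R z = R (-z)}
        = insert 0 (Set.range α ∪ Set.range fun k => -α k) ∧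
      ∀ z : ℝ, (∀ k, z ≠ ε k ∧ z ≠ -ε k) →
        R z - R (-z) = 2 * z * ∏ k, (z ^ 2 - α k ^ 2) / (z ^ 2 - ε k ^ 2) := by
  intro R
  have hR : ∀ z, R z = z - lam / N * ∑ k, ϱ k / (ε k + z) := fun z => rfl
  set c : ℝ := lam / N with hc_def
  have hc : 0 < c := div_pos hlam hN
  set e : Fin d → ℝ := fun k => ε k ^ 2 with he_def
  have he_app : ∀ k, e k = ε k ^ 2 := fun k => rfl
  have hepos : ∀ k, 0 < e k := fun k => by rw [he_app k]; exact pow_pos (hεpos k) 2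
  have heinj : Function.Injective e := by
    intro a b h
    rw [he_app, he_app] at h
    have h2 : (ε a - ε b) * (ε a + ε b) = 0 := by linear_combination h
    rcases mul_eq_zero.1 h2 with h3 | h3
    · exact hεinj (sub_eq_zero.1 h3)
    · exact absurd h3 (show (0:ℝ) < ε a + ε b by have := hεpos a; have := hεpos b; linarith).ne'
  obtain ⟨w, hwpos, hwinj, hwne, hwroot⟩ := exists_w hc heinj hepos hϱ
  have hform := gfun_prod_eq hc hϱ hwinj hwne hwroot
  set α : Fin d → ℝ := fun k => Real.sqrt (w k) with hα_def
  have hα2 : ∀ k, α k ^ 2 = w k := fun k => Real.sq_sqrt (hwpos k).le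
  have hαpos : ∀ k, 0 < α k := fun k => Real.sqrt_pos.2 (hwpos k)
  have hαinj : Function.Injective α := by
    intro a b h
    apply hwinj
    rw [← hα2 a, ← hα2 b, h]
  -- the key odd-part identity
  have hRdiff : ∀ z : ℝ, (∀ k, z ≠ ε k ∧ z ≠ -ε k) →
      R z - R (-z) = 2 * z * gfun c e ϱ (z ^ 2) := by
    intro z hz
    have hterm : ∀ k : Fin d, ϱ k / (ε k + z) - ϱ k / (ε k + -z)
        = 2 * z * (ϱ k / (z ^ 2 - e k)) := by
      intro k
      have h1 : ε k + z ≠ 0 := fun h => (hz k).2 (by linarith)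
      have h2 : ε k + -z ≠ 0 := fun h => (hz k).1 (by linarith)
      have h3 : z ^ 2 - e k ≠ 0 := by
        rw [he_app]
        intro h
        have : (ε k + z) * (ε k + -z) = 0 := by linear_combination -h
        rcases mul_eq_zero.1 this with h4 | h4
        exacts [h1 h4, h2 h4]
      field_simp
      ring
    rw [hR z, hR (-z), gfun]
    rw [show (z - c * ∑ k, ϱ k / (ε k + z)) - (-z - c * ∑ k, ϱ k / (ε k + -z))
        = 2 * z - c * ∑ k, (ϱ k / (ε k + z) - ϱ k / (ε k + -z)) by
      rw [Finset.sum_sub_distrib]; ring]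
    rw [Finset.sum_congr rfl (fun k _ => hterm k), ← Finset.mul_sum]
    ring
  -- z² avoids the poles
  have hz2ne : ∀ z : ℝ, (∀ k, z ≠ ε k ∧ z ≠ -ε k) → ∀ j, z ^ 2 ≠ e j := by
    intro z hz j h
    rw [he_app] at h
    have h2 : (z - ε j) * (z + ε j) = 0 := by linear_combination h
    rcases mul_eq_zero.1 h2 with h3 | h3
    · exact (hz j).1 (sub_eq_zero.1 h3)
    · exact (hz j).2 (by linarith)
  refine ⟨α, hαpos, hαinj, ?_, ?_⟩
  · ext z
    simp only [Set.mem_setOf_eq, Set.mem_insert_iff, Set.mem_union, Set.mem_range]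
    constructor
    · rintro ⟨hz, heq⟩
      rcases eq_or_ne z 0 with rfl | hz0
      · exact Or.inl rfl
      right
      have h1 : 2 * z * gfun c e ϱ (z ^ 2) = 0 := by
        rw [← hRdiff z hz, heq, sub_self]
      have h2 : gfun c e ϱ (z ^ 2) = 0 := by
        rcases mul_eq_zero.1 h1 with h | h
        · exact absurd h (by simpa using hz0)
        · exact h
      rw [hform (z ^ 2) (hz2ne z hz)] at h2
      obtain ⟨k, _, hk⟩ := Finset.prod_eq_zero_iff.1 h2
      have hnum : z ^ 2 - w k = 0 := by
        rcases div_eq_zero_iff.1 hk with h | h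
        · exact h
        · exact absurd h (sub_ne_zero_of_ne (hz2ne z hz k))
      have hzw : z ^ 2 = α k ^ 2 := by rw [hα2 k]; linarith
      have h3 : (z - α k) * (z + α k) = 0 := by linear_combination hzw
      rcases mul_eq_zero.1 h3 with h4 | h4
      · exact Or.inl ⟨k, (sub_eq_zero.1 h4).symm⟩
      · exact Or.inr ⟨k, by linarith⟩
    · intro hmem
      have hcond : ∀ z₀ : ℝ, (∀ k, z₀ ≠ ε k ∧ z₀ ≠ -ε k) → R z₀ - R (-z₀) = 0 →
          (∀ k, z₀ ≠ ε k ∧ z₀ ≠ -ε k) ∧ R z₀ = R (-z₀) :=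
        fun z₀ h1 h2 => ⟨h1, by linarith⟩
      have hαne : ∀ k j, α k ≠ ε j ∧ α k ≠ -ε j := by
        intro k j
        constructor
        · intro h
          apply hwne k j
          rw [← hα2 k, h, he_app]
        · intro h
          have := hαpos k
          have := hεpos j
          linarith
      rcases hmem with rfl | ⟨k, rfl⟩ | ⟨k, hk⟩
      · refine ⟨fun k => ⟨(hεpos k).ne, fun h => ?_⟩, by norm_num⟩
        have := hεpos k; linarith
      · refine hcond _ (hαne k) ?_
        rw [hRdiff _ (hαne k), hα2 k, hwroot k, mul_zero]
      · rw [← hk]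
        have hne : ∀ j, -α k ≠ ε j ∧ -α k ≠ -ε j := by
          intro j
          constructor
          · intro h; have := hαpos k; have := hεpos j; linarith
          · intro h
            exact (hαne k j).1 (by linarith)
        refine hcond _ hne ?_
        rw [hRdiff _ hne]
        rw [show (-α k) ^ 2 = α k ^ 2 by ring, hα2 k, hwroot k, mul_zero]
  · intro z hz
    rw [hRdiff z hz, hform (z ^ 2) (hz2ne z hz)]
    congr 1
    apply Finset.prod_congr rfl
    intro k _
    rw [hα2 k, he_app]
end

section
/- Let $R(z) = z - \frac{\lambda}{N}\sum_{k=1}^d \frac{\varrho_k}{\varepsilon_k+z}$ with distinct positive reals $\varepsilon_k$, positive $\varrho_k$, $\lambda, N > 0$, and let $\{0,\pm\alpha_1,\dots,\pm\alpha_d\}$ ($\alpha_k>0$ distinct) be the real roots of $R(z)=R(-z)$, so that $R(z)-R(-z) = 2z\prod_{k=1}^d \frac{z^2-\alpha_k^2}{z^2-\varepsilon_k^2}$. Then the diagonal value of the planar two-point function satisfies $\mathcal{G}^{(0)}(z,z) = \frac{2(R(z) - R(0))}{(R(z)-R(-z))^2}\prod_{k=1}^d \frac{(R(z)-R(\alpha_k))^2}{(R(z)-R(\varepsilon_k))^2}$.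 -/
open Finset

open Polynomial

private lemma prod_neg_fin {d : ℕ} (g : Fin d → ℝ) :
    ∏ j, (-(g j)) = (-1) ^ d * ∏ j, g j := by
  calc ∏ j, (-(g j)) = ∏ j, ((-1) * g j) := Finset.prod_congr rfl fun j _ => by ring
    _ = (-1) ^ d * ∏ j, g j := by
        rw [Finset.prod_mul_distrib, Finset.prod_const, Finset.card_univ, Fintype.card_fin]

set_option maxHeartbeats 2000000 in
/-- The diagonal planar two-point function simplifies to
`𝒢⁽⁰⁾(z,z) = 2(R(z)-R(0))/(R(z)-R(-z))² · ∏ₖ (R(z)-R(αₖ))²/(R(z)-R(εₖ))²`,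
where `{0,±α₁,…,±α_d}` are the real roots of `R(z) = R(-z)` and `𝒢⁽⁰⁾(z,z)`
is given by `(1/(R(z)-R(-z))) ∏ⱼ (R(z)-R(-ẑʲ))/(R(z)-R(εⱼ))` with
`ẑ¹,…,ẑ^d` the other preimages of `R(z)`. -/
theorem diagonal_two_point_function (d : ℕ) (lam N : ℝ) (hlam : 0 < lam)
    (hN : 0 < N) (ε ϱ : Fin d → ℝ) (hεpos : ∀ k, 0 < ε k)
    (hεinj : Function.Injective ε) (hϱ : ∀ k, 0 < ϱ k) :
    let R : ℝ → ℝ := fun x => x - lam / N * ∑ k, ϱ k / (ε k + x)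
    ∀ α : Fin d → ℝ, (∀ k, 0 < α k) → Function.Injective α →
      (∀ x : ℝ, (∀ k, x ≠ ε k ∧ x ≠ -ε k) →
        R x - R (-x) = 2 * x * ∏ k, (x ^ 2 - α k ^ 2) / (x ^ 2 - ε k ^ 2)) →
    ∀ (z : ℝ) (zh : Fin d → ℝ),
      (∀ k, z ≠ ε k ∧ z ≠ -ε k) →
      (∀ k l, zh k ≠ ε l ∧ zh k ≠ -ε l) →
      (∀ k, R (zh k) = R z) →
      Function.Injective (Fin.cons z zh : Fin (d + 1) → ℝ) →
      R z - R (-z) ≠ 0 → (∀ j, R z ≠ R (ε j)) →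
      1 / (R z - R (-z)) * ∏ j, (R z - R (-zh j)) / (R z - R (ε j))
        = 2 * (R z - R 0) / (R z - R (-z)) ^ 2
            * ∏ k, (R z - R (α k)) ^ 2 / (R z - R (ε k)) ^ 2 := by
  intro R α hαpos hαinj hRR z zh hz hzh hpre hinj hD hV
  classical
  have hR : ∀ x, R x = x - lam / N * ∑ k, ϱ k / (ε k + x) := fun _ => rfl
  set c : ℝ := lam / N with hcdef
  have hc0 : c ≠ 0 := ne_of_gt (div_pos hlam hN)
  have hεz : ∀ k, ε k + z ≠ 0 := fun k h => (hz k).2 (by linarith)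
  have hεz' : ∀ k, ε k - z ≠ 0 := fun k h => (hz k).1 (by linarith)
  have hεzh : ∀ j k, ε k + zh j ≠ 0 := fun j k h => (hzh j k).2 (by linarith)
  have hεzh' : ∀ j k, ε k - zh j ≠ 0 := fun j k h => (hzh j k).1 (by linarith)
  have hzzh : ∀ j, z - zh j ≠ 0 := by
    intro j h
    have h2 : (Fin.cons z zh : Fin (d+1) → ℝ) 0 = (Fin.cons z zh : Fin (d+1) → ℝ) j.succ := by
      rw [Fin.cons_zero, Fin.cons_succ]; linarith
    exact (Fin.succ_ne_zero j).symm (hinj h2)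
  have hzhinj : Function.Injective zh := by
    intro a b h
    have h2 : (Fin.cons z zh : Fin (d+1) → ℝ) a.succ = (Fin.cons z zh : Fin (d+1) → ℝ) b.succ := by
      rw [Fin.cons_succ, Fin.cons_succ]; exact h
    exact Fin.succ_injective d (hinj h2)
  have hz0 : z ≠ 0 := by intro h; apply hD; rw [h, neg_zero, sub_self]
  have hRdiff : ∀ x y : ℝ, (∀ k, ε k + x ≠ 0) → (∀ k, ε k + y ≠ 0) →
      R x - R y = (x - y) * (1 + c * ∑ k, ϱ k / ((ε k + x) * (ε k + y))) := by
    intro x y hx hy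
    rw [hR x, hR y]
    have h1 : ∀ k : Fin d, ϱ k / (ε k + x) - ϱ k / (ε k + y)
        = -((x - y) * (ϱ k / ((ε k + x) * (ε k + y)))) := by
      intro k
      field_simp [hx k, hy k]
      ring
    calc x - c * ∑ k, ϱ k / (ε k + x) - (y - c * ∑ k, ϱ k / (ε k + y))
        = x - y - c * ∑ k, (ϱ k / (ε k + x) - ϱ k / (ε k + y)) := by
          rw [Finset.sum_sub_distrib]; ring
      _ = x - y - c * ∑ k, -((x - y) * (ϱ k / ((ε k + x) * (ε k + y)))) := by
          rw [Finset.sum_congr rfl fun k _ => h1 k]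
      _ = (x - y) * (1 + c * ∑ k, ϱ k / ((ε k + x) * (ε k + y))) := by
          rw [Finset.sum_neg_distrib, ← Finset.mul_sum]; ring
  have hSz : ∀ j, 1 + c * ∑ k, ϱ k / ((ε k + z) * (ε k + zh j)) = 0 := by
    intro j
    have h0 := hRdiff z (zh j) hεz (hεzh j)
    rw [hpre j, sub_self] at h0
    exact ((mul_eq_zero.mp h0.symm).resolve_left (hzzh j))
  -- the polynomial whose roots are the other preimages
  set T : Polynomial ℝ := (∏ l, (C (ε l) + X)) +
      C c * ∑ k, C (ϱ k / (ε k + z)) * ∏ l ∈ Finset.univ.erase k, (C (ε l) + X) with hTdef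
  have hTeval : ∀ y : ℝ, T.eval y
      = (∏ l, (ε l + y)) + c * ∑ k, ϱ k / (ε k + z) * ∏ l ∈ Finset.univ.erase k, (ε l + y) := by
    intro y
    simp [hTdef, eval_prod, eval_finset_sum]
  have hTkey : ∀ y : ℝ, (∀ k, ε k + y ≠ 0) →
      T.eval y = (1 + c * ∑ k, ϱ k / ((ε k + z) * (ε k + y))) * ∏ l, (ε l + y) := by
    intro y hy
    rw [hTeval y, add_mul, one_mul, mul_assoc, Finset.sum_mul]
    congr 2
    refine Finset.sum_congr rfl fun k _ => ?_
    rw [← Finset.mul_prod_erase Finset.univ _ (Finset.mem_univ k)]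
    field_simp [hy k, hεz k]
  have hTroot : ∀ j, T.eval (zh j) = 0 := fun j => by
    rw [hTkey (zh j) (fun k => hεzh j k), hSz j, zero_mul]
  set Q : Polynomial ℝ := ∏ j, (X - C (zh j)) with hQdef
  have hmonXC : ∀ l : Fin d, (C (ε l) + X : Polynomial ℝ).Monic := fun l => by
    rw [add_comm]; exact monic_X_add_C _
  have hP0monic : (∏ l, (C (ε l) + X) : Polynomial ℝ).Monic :=
    monic_prod_of_monic _ _ fun l _ => hmonXC l
  have hP0deg : (∏ l, (C (ε l) + X) : Polynomial ℝ).degree = (d : ℕ) := by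
    rw [degree_eq_natDegree hP0monic.ne_zero, natDegree_prod_of_monic _ _ fun l _ => hmonXC l]
    norm_num [natDegree_X_add_C, add_comm]
  have hQmonic : Q.Monic := monic_prod_of_monic _ _ fun j _ => monic_X_sub_C _
  have hQdeg : Q.degree = (d : ℕ) := by
    rw [degree_eq_natDegree hQmonic.ne_zero, hQdef,
      natDegree_prod_of_monic _ _ fun j _ => monic_X_sub_C _]
    norm_num [natDegree_X_sub_C]
  have hEdeg : (C c * ∑ k, C (ϱ k / (ε k + z)) * ∏ l ∈ Finset.univ.erase k,
      (C (ε l) + X) : Polynomial ℝ).degree < (d : ℕ) := by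
    refine lt_of_le_of_lt (degree_mul_le _ _) ?_
    refine lt_of_le_of_lt (add_le_add degree_C_le (degree_sum_le _ _)) ?_
    rw [zero_add]
    refine (Finset.sup_lt_iff (WithBot.bot_lt_coe d)).mpr fun k _ => ?_
    refine lt_of_le_of_lt (degree_mul_le _ _) ?_
    have h2 : (∏ l ∈ Finset.univ.erase k, (C (ε l) + X) : Polynomial ℝ).Monic :=
      monic_prod_of_monic _ _ fun l _ => hmonXC l
    have h3 : (∏ l ∈ Finset.univ.erase k, (C (ε l) + X) : Polynomial ℝ).natDegree = d - 1 := by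
      rw [natDegree_prod_of_monic _ _ fun l _ => hmonXC l]
      norm_num [natDegree_X_add_C, add_comm, Finset.card_erase_of_mem]
    refine lt_of_le_of_lt (add_le_add degree_C_le le_rfl) ?_
    rw [zero_add, degree_eq_natDegree h2.ne_zero, h3]
    exact Nat.cast_lt.mpr (Nat.sub_lt k.pos one_pos)
  have hTmonic : T.Monic := by
    rw [hTdef]
    exact hP0monic.add_of_left (by rw [hP0deg]; exact hEdeg)
  have hTdeg : T.degree = (d : ℕ) := by
    rw [hTdef, degree_add_eq_left_of_degree_lt (by rw [hP0deg]; exact hEdeg)]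
    exact hP0deg
  have hTQ : T = Q := by
    have h0 : T - Q = 0 := by
      by_cases hne : T - Q = 0
      · exact hne
      refine Polynomial.eq_zero_of_natDegree_lt_card_of_eval_eq_zero (T - Q) hzhinj
        (fun j => ?_) ?_
      · have hQ0 : Q.eval (zh j) = 0 := by
          rw [hQdef, eval_prod]
          exact Finset.prod_eq_zero (Finset.mem_univ j) (by simp)
        rw [eval_sub, hTroot j, hQ0, sub_zero]
      · rw [Fintype.card_fin]
        have hlt : (T - Q).degree < (d : ℕ) := by
          have h5 := degree_sub_lt (hTdeg.trans hQdeg.symm) hTmonic.ne_zero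
            (by rw [hTmonic.leadingCoeff, hQmonic.leadingCoeff])
          rwa [hTdeg] at h5
        exact (natDegree_lt_iff_degree_lt hne).mpr hlt
    have := sub_eq_zero.mp h0
    exact this
  have hTval : ∀ y : ℝ, (∏ l, (ε l + y)) + c * ∑ k, ϱ k / (ε k + z) *
      ∏ l ∈ Finset.univ.erase k, (ε l + y) = ∏ j, (y - zh j) := by
    intro y
    have h1 := congrArg (eval y) hTQ
    have h2 : Q.eval y = ∏ j, (y - zh j) := by rw [hQdef, eval_prod]; simp
    rw [← hTeval y, h1, h2]
  have hform : ∀ y : ℝ, (∀ k, ε k + y ≠ 0) →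
      R z - R y = (z - y) * (∏ j, (y - zh j)) / ∏ l, (ε l + y) := by
    intro y hy
    rw [hRdiff z y hεz hy, mul_div_assoc]
    congr 1
    rw [eq_div_iff (Finset.prod_ne_zero_iff.mpr fun l _ => hy l), ← hTval y, ← hTeval y,
      hTkey y hy]
  -- the polynomial identity ∏ (t - α²) = ∏ (t - ε²) - c ∑ ϱ ∏' (t - ε²)
  set F : Polynomial ℝ := (∏ k, (X - C (ε k ^ 2))) -
      C c * ∑ k, C (ϱ k) * ∏ l ∈ Finset.univ.erase k, (X - C (ε l ^ 2)) with hFdef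
  have hFeval : ∀ t : ℝ, F.eval t
      = (∏ k, (t - ε k ^ 2)) - c * ∑ k, ϱ k * ∏ l ∈ Finset.univ.erase k, (t - ε l ^ 2) := by
    intro t
    simp [hFdef, eval_prod, eval_finset_sum]
  have hFα : F = ∏ k, (X - C (α k ^ 2)) := by
    refine Polynomial.eq_of_infinite_eval_eq _ _ ?_
    refine Set.Infinite.mono ?_ (Set.Ioi_infinite ((∑ k, ε k ^ 2) + 1))
    intro t ht
    simp only [Set.mem_Ioi] at ht
    have hsum : (0:ℝ) ≤ ∑ k, ε k ^ 2 := Finset.sum_nonneg fun k _ => sq_nonneg _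
    have htpos : 0 < t := by linarith
    set x := Real.sqrt t with hxdef
    have hx2 : x ^ 2 = t := Real.sq_sqrt htpos.le
    have hxpos : 0 < x := Real.sqrt_pos.mpr htpos
    have hxε : ∀ k, x ≠ ε k ∧ x ≠ -ε k := by
      intro k
      constructor
      · intro h
        have h2 : ε k ^ 2 ≤ ∑ i, ε i ^ 2 :=
          Finset.single_le_sum (f := fun i => ε i ^ 2) (fun i _ => sq_nonneg _)
            (Finset.mem_univ k)
        rw [← h, hx2] at h2
        linarith
      · intro h; have := hεpos k; linarith
    have hεx : ∀ k, ε k + x ≠ 0 := fun k => ne_of_gt (add_pos (hεpos k) hxpos)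
    have hεx' : ∀ k, ε k + -x ≠ 0 := by
      intro k h
      exact (hxε k).1 (by linarith)
    have hx2ε : ∀ k, x ^ 2 - ε k ^ 2 ≠ 0 := by
      intro k h
      have h2 : (x - ε k) * (x + ε k) = 0 := by linear_combination h
      rcases mul_eq_zero.mp h2 with h3 | h3
      · exact (hxε k).1 (by linarith)
      · exact (hxε k).2 (by linarith)
    have h1 := hRR x hxε
    have h2 := hRdiff x (-x) hεx hεx'
    rw [h1, show x - -x = 2 * x from by ring] at h2
    have h3 : ∏ k, ((x ^ 2 - α k ^ 2) / (x ^ 2 - ε k ^ 2))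
        = 1 + c * ∑ k, ϱ k / ((ε k + x) * (ε k + -x)) :=
      mul_left_cancel₀ (by positivity : (2:ℝ) * x ≠ 0) h2
    rw [Finset.prod_div_distrib] at h3
    have hprodε : (∏ k, (x ^ 2 - ε k ^ 2)) ≠ 0 :=
      Finset.prod_ne_zero_iff.mpr fun k _ => hx2ε k
    have h4 : ∏ k, (x ^ 2 - α k ^ 2)
        = (1 + c * ∑ k, ϱ k / ((ε k + x) * (ε k + -x))) * ∏ k, (x ^ 2 - ε k ^ 2) := by
      rw [← h3, div_mul_cancel₀ _ hprodε]
    have h5 : ∀ k : Fin d, ϱ k / ((ε k + x) * (ε k + -x)) * ∏ l, (x ^ 2 - ε l ^ 2)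
        = -(ϱ k * ∏ l ∈ Finset.univ.erase k, (x ^ 2 - ε l ^ 2)) := by
      intro k
      rw [← Finset.mul_prod_erase Finset.univ _ (Finset.mem_univ k)]
      field_simp [hεx k, hεx' k]
      ring
    show F.eval t = _
    rw [hFeval t, eval_prod]
    simp only [eval_sub, eval_X, eval_C]
    rw [← hx2, h4, add_mul, one_mul, mul_assoc, Finset.sum_mul,
      Finset.sum_congr rfl fun k _ => h5 k, Finset.sum_neg_distrib]
    ring
  have hf : ∀ t : ℝ, ∏ k, (t - α k ^ 2)
      = (∏ k, (t - ε k ^ 2)) - c * ∑ k, ϱ k * ∏ l ∈ Finset.univ.erase k, (t - ε l ^ 2) := by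
    intro t
    have h1 := congrArg (eval t) hFα
    rw [hFeval t, eval_prod] at h1
    simp only [eval_sub, eval_X, eval_C] at h1
    exact h1.symm
  have hε2 : ∀ l m : Fin d, l ≠ m → ε l ^ 2 - ε m ^ 2 ≠ 0 := by
    intro l m hlm h
    have h2 : (ε l - ε m) * (ε l + ε m) = 0 := by linear_combination h
    rcases mul_eq_zero.mp h2 with h3 | h3
    · exact hlm (hεinj (by linarith))
    · have := hεpos l; have := hεpos m; linarith
  have hφ : ∀ l, ∏ k, (ε l ^ 2 - α k ^ 2)
      = -(c * (ϱ l * ∏ m ∈ Finset.univ.erase l, (ε l ^ 2 - ε m ^ 2))) := by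
    intro l
    have hz1 : ∏ k, (ε l ^ 2 - ε k ^ 2) = 0 :=
      Finset.prod_eq_zero (Finset.mem_univ l) (sub_self (ε l ^ 2))
    have hz2 : ∑ k, ϱ k * ∏ m ∈ Finset.univ.erase k, (ε l ^ 2 - ε m ^ 2)
        = ϱ l * ∏ m ∈ Finset.univ.erase l, (ε l ^ 2 - ε m ^ 2) := by
      refine Finset.sum_eq_single l (fun k _ hkl => ?_) (fun h => absurd (Finset.mem_univ l) h)
      rw [Finset.prod_eq_zero (Finset.mem_erase.mpr ⟨Ne.symm hkl, Finset.mem_univ l⟩)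
        (sub_self (ε l ^ 2)), mul_zero]
    rw [hf (ε l ^ 2), hz1, hz2]
    ring
  have hφ0 : ∀ l, (∏ k, (ε l ^ 2 - α k ^ 2)) ≠ 0 := by
    intro l
    rw [hφ l]
    refine neg_ne_zero.mpr (mul_ne_zero hc0 (mul_ne_zero (ne_of_gt (hϱ l)) ?_))
    exact Finset.prod_ne_zero_iff.mpr fun m hm => hε2 l m (Finset.ne_of_mem_erase hm).symm
  have hεα2 : ∀ l k, ε l ^ 2 - α k ^ 2 ≠ 0 := fun l k =>
    Finset.prod_ne_zero_iff.mp (hφ0 l) k (Finset.mem_univ k)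
  have hεαsub : ∀ l k, ε l - α k ≠ 0 := by
    intro l k h
    exact hεα2 l k (by rw [show ε l = α k from by linarith]; ring)
  have hεαadd : ∀ l k, ε l + α k ≠ 0 := fun l k => ne_of_gt (add_pos (hεpos l) (hαpos k))
  have hαεne : ∀ k l, α k ≠ ε l ∧ α k ≠ -ε l := by
    intro k l
    constructor
    · intro h; exact hεαsub l k (by rw [h]; ring)
    · intro h; have := hεpos l; have := hαpos k; linarith
  have hRα : ∀ k, R (α k) = R (-α k) := by
    intro k
    have h := hRR (α k) (hαεne k)
    rw [Finset.prod_eq_zero (Finset.mem_univ k)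
      (by rw [sub_self, zero_div] : (α k ^ 2 - α k ^ 2) / (α k ^ 2 - ε k ^ 2) = 0),
      mul_zero] at h
    exact sub_eq_zero.mp h
  -- sign bookkeeping
  set m1 : ℝ := (-1) ^ d with hm1def
  have hm1 : m1 * m1 = 1 := by rw [hm1def, ← mul_pow]; norm_num
  have hm1d : m1 ^ d * m1 ^ d = 1 := by rw [← mul_pow, hm1, one_pow]
  have prodneg : ∀ g : Fin d → ℝ, (∏ j, (-(g j))) = m1 * ∏ j, g j := by
    intro g; rw [hm1def]; exact prod_neg_fin g
  -- closed forms for the differences of R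
  have q1 : R z - R (-z) = 2 * z * (m1 * ∏ j, (z + zh j)) / ∏ l, (ε l - z) := by
    have h := hform (-z) (fun k => by rw [← sub_eq_add_neg]; exact hεz' k)
    rw [h, show z - -z = 2 * z from by ring,
      Finset.prod_congr rfl (fun j _ => show -z - zh j = -(z + zh j) from by ring), prodneg,
      Finset.prod_congr rfl (fun l _ => show ε l + -z = ε l - z from by ring)]
  have q2 : ∀ j, R z - R (-zh j)
      = (z + zh j) * (m1 * ∏ m0, (zh j + zh m0)) / ∏ l, (ε l - zh j) := by
    intro j
    have h := hform (-zh j) (fun k => by rw [← sub_eq_add_neg]; exact hεzh' j k)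
    rw [h, show z - -zh j = z + zh j from by ring,
      Finset.prod_congr rfl (fun m0 _ => show -zh j - zh m0 = -(zh j + zh m0) from by ring),
      prodneg,
      Finset.prod_congr rfl (fun l _ => show ε l + -zh j = ε l - zh j from by ring)]
  have q3 : ∀ k, R z - R (ε k)
      = (z - ε k) * (∏ j, (ε k - zh j)) / ∏ l, (ε l + ε k) := by
    intro k
    have h := hform (ε k) (fun l => ne_of_gt (add_pos (hεpos l) (hεpos k)))
    rw [h]
  have q4 : R z - R 0 = z * (m1 * ∏ j, zh j) / ∏ l, ε l := by
    have h := hform 0 (fun k => by rw [add_zero]; exact ne_of_gt (hεpos k))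
    rw [h, sub_zero,
      Finset.prod_congr rfl (fun j _ => show (0:ℝ) - zh j = -(zh j) from by ring), prodneg,
      Finset.prod_congr rfl (fun l _ => add_zero (ε l))]
  have q5 : ∀ k, (R z - R (α k)) ^ 2
      = (z ^ 2 - α k ^ 2) * (∏ j, (zh j ^ 2 - α k ^ 2)) / ∏ l, (ε l ^ 2 - α k ^ 2) := by
    intro k
    have hα1 := hform (α k) (fun l => hεαadd l k)
    have hα2 := hform (-α k) (fun l => by rw [← sub_eq_add_neg]; exact hεαsub l k)
    have hPp : (∏ l, (ε l + α k)) ≠ 0 := Finset.prod_ne_zero_iff.mpr fun l _ => hεαadd l k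
    have hPm : (∏ l, (ε l - α k)) ≠ 0 := Finset.prod_ne_zero_iff.mpr fun l _ => hεαsub l k
    calc (R z - R (α k)) ^ 2 = (R z - R (α k)) * (R z - R (-α k)) := by
          rw [sq]; nth_rewrite 2 [hRα k]; rfl
      _ = ((z - α k) * ∏ j, (α k - zh j)) * ((z + α k) * ∏ j, (-α k - zh j))
            / ((∏ l, (ε l + α k)) * ∏ l, (ε l - α k)) := by
          rw [hα1, hα2, show z - -α k = z + α k from by ring, Finset.prod_congr rfl
            (fun l _ => show ε l + -α k = ε l - α k from by ring), div_mul_div_comm]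
      _ = (z ^ 2 - α k ^ 2) * (∏ j, (zh j ^ 2 - α k ^ 2)) / ∏ l, (ε l ^ 2 - α k ^ 2) := by
          rw [show ((z - α k) * ∏ j, (α k - zh j)) * ((z + α k) * ∏ j, (-α k - zh j))
              = (z ^ 2 - α k ^ 2) * ((∏ j, (α k - zh j)) * ∏ j, (-α k - zh j)) from by ring,
            ← Finset.prod_mul_distrib, ← Finset.prod_mul_distrib,
            Finset.prod_congr rfl (fun j _ =>
              show (α k - zh j) * (-α k - zh j) = zh j ^ 2 - α k ^ 2 from by ring),
            Finset.prod_congr rfl (fun l _ =>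
              show (ε l + α k) * (ε l - α k) = ε l ^ 2 - α k ^ 2 from by ring)]
  -- nonvanishing products
  have hGp : (∏ l, (ε l - z)) ≠ 0 := Finset.prod_ne_zero_iff.mpr fun l _ => hεz' l
  have hPz : (∏ l, (ε l + z)) ≠ 0 := Finset.prod_ne_zero_iff.mpr fun l _ => hεz l
  have hPε : (∏ l, ε l) ≠ 0 := Finset.prod_ne_zero_iff.mpr fun l _ => ne_of_gt (hεpos l)
  have hm1ne : m1 ≠ 0 := by rw [hm1def]; exact pow_ne_zero _ (by norm_num)
  have sqprod : ∀ x : ℝ, ∏ l, (x ^ 2 - ε l ^ 2) = m1 * ((∏ l, (ε l - x)) * ∏ l, (ε l + x)) := by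
    intro x
    rw [Finset.prod_congr rfl
      (fun l _ => show x ^ 2 - ε l ^ 2 = -((ε l - x) * (ε l + x)) from by ring), prodneg,
      Finset.prod_mul_distrib]
  have v1 : ∏ k, (z ^ 2 - α k ^ 2) = (∏ l, (ε l + z)) * ∏ j, (z + zh j) := by
    have h := hRR z hz
    rw [q1, Finset.prod_div_distrib, sqprod z] at h
    field_simp [hGp, hPz, hm1ne] at h
    refine mul_left_cancel₀ (mul_ne_zero (mul_ne_zero two_ne_zero hz0) hGp) ?_
    linear_combination (-(2 * z * ∏ l, (ε l - z))) * h
      + (2 * z * (∏ l, (ε l - z)) * (∏ l, (ε l + z)) * (∏ j, (z + zh j))) * hm1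
  have hBj : ∀ j, (∏ l, (ε l - zh j)) ≠ 0 :=
    fun j => Finset.prod_ne_zero_iff.mpr fun l _ => hεzh' j l
  have hΛj : ∀ j, (∏ l, (ε l + zh j)) ≠ 0 :=
    fun j => Finset.prod_ne_zero_iff.mpr fun l _ => hεzh j l
  have v2 : ∀ j, 2 * zh j * ∏ k, (zh j ^ 2 - α k ^ 2)
      = (z + zh j) * ((∏ m0, (zh j + zh m0)) * ∏ l, (ε l + zh j)) := by
    intro j
    have h := hRR (zh j) (hzh j)
    rw [hpre j, q2 j, Finset.prod_div_distrib, sqprod (zh j)] at h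
    field_simp [hBj j, hΛj j, hm1ne] at h
    refine mul_right_cancel₀ (hBj j) ?_
    linear_combination (-(∏ l, (ε l - zh j))) * h + ((z + zh j) * (∏ m0, (zh j + zh m0))
      * (∏ l, (ε l - zh j)) * (∏ l, (ε l + zh j))) * hm1
  have v4 : ∀ l, (ε l + z) * (m1 * ∏ j, (ε l + zh j))
      = c * (ϱ l * ∏ m0 ∈ Finset.univ.erase l, (ε m0 - ε l)) := by
    intro l
    have h := hTval (-ε l)
    have e1 : ∏ m0, (ε m0 + -ε l) = 0 :=
      Finset.prod_eq_zero (Finset.mem_univ l) (show ε l + -ε l = 0 from by ring)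
    have e2 : ∑ k, ϱ k / (ε k + z) * ∏ m0 ∈ Finset.univ.erase k, (ε m0 + -ε l)
        = ϱ l / (ε l + z) * ∏ m0 ∈ Finset.univ.erase l, (ε m0 + -ε l) := by
      refine Finset.sum_eq_single l (fun k _ hkl => ?_) (fun h => absurd (Finset.mem_univ l) h)
      rw [Finset.prod_eq_zero (Finset.mem_erase.mpr ⟨Ne.symm hkl, Finset.mem_univ l⟩)
        (show ε l + -ε l = 0 from by ring), mul_zero]
    have e4 : ∏ m0 ∈ Finset.univ.erase l, (ε m0 + -ε l)
        = ∏ m0 ∈ Finset.univ.erase l, (ε m0 - ε l) :=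
      Finset.prod_congr rfl fun m0 _ => by ring
    have e3 : ∏ j, (-ε l - zh j) = m1 * ∏ j, (ε l + zh j) := by
      rw [Finset.prod_congr rfl
        (fun j _ => show -ε l - zh j = -(ε l + zh j) from by ring), prodneg]
    rw [e1, e2, e4, e3, zero_add] at h
    field_simp [hεz l] at h
    linear_combination (-1 : ℝ) * h
  -- aggregated relations
  have rel2 : (2:ℝ) ^ d * ((∏ j, zh j) * ∏ j, ∏ k, (zh j ^ 2 - α k ^ 2))
      = (∏ j, (z + zh j)) * ((∏ j, ∏ m0, (zh j + zh m0)) * ∏ j, ∏ l, (ε l + zh j)) := by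
    have h := Finset.prod_congr rfl (fun j (_ : j ∈ Finset.univ) => v2 j)
    simp only [Finset.prod_mul_distrib, Finset.prod_const, Finset.card_univ,
      Fintype.card_fin] at h
    linear_combination h
  have rel5 : (∏ l, (ε l + z)) * (m1 ^ d * ∏ l, ∏ j, (ε l + zh j))
      = c ^ d * ((∏ l, ϱ l) * ∏ l, ∏ m0 ∈ Finset.univ.erase l, (ε m0 - ε l)) := by
    have h := Finset.prod_congr rfl (fun l (_ : l ∈ Finset.univ) => v4 l)
    simp only [Finset.prod_mul_distrib, Finset.prod_const, Finset.card_univ,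
      Fintype.card_fin] at h
    linear_combination h
  have hE2 : ∀ l, ∏ m0 ∈ Finset.univ.erase l, (ε l ^ 2 - ε m0 ^ 2)
      = (∏ m0 ∈ Finset.univ.erase l, (ε l - ε m0)) * ∏ m0 ∈ Finset.univ.erase l, (ε l + ε m0) := by
    intro l
    rw [← Finset.prod_mul_distrib]
    exact Finset.prod_congr rfl fun m0 _ => by ring
  have rel4 : ∏ l, ∏ k, (ε l ^ 2 - α k ^ 2)
      = m1 * (c ^ d * ((∏ l, ϱ l) * ((∏ l, ∏ m0 ∈ Finset.univ.erase l, (ε l - ε m0))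
          * ∏ l, ∏ m0 ∈ Finset.univ.erase l, (ε l + ε m0)))) := by
    rw [Finset.prod_congr rfl (fun l (_ : l ∈ Finset.univ) => (hφ l).trans
      (by rw [hE2 l] : -(c * (ϱ l * ∏ m0 ∈ Finset.univ.erase l, (ε l ^ 2 - ε m0 ^ 2)))
        = -(c * (ϱ l * ((∏ m0 ∈ Finset.univ.erase l, (ε l - ε m0))
          * ∏ m0 ∈ Finset.univ.erase l, (ε l + ε m0)))))), prodneg]
    simp only [Finset.prod_mul_distrib, Finset.prod_const, Finset.card_univ, Fintype.card_fin]
  have rel6 : ∏ l, ∏ m0 ∈ Finset.univ.erase l, (ε m0 - ε l)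
      = ∏ l, ∏ m0 ∈ Finset.univ.erase l, (ε l - ε m0) := by
    refine Finset.prod_comm' ?_
    intro x y
    simp only [Finset.mem_univ, Finset.mem_erase, and_true, true_and]
    exact ⟨fun h => h.symm, fun h => h.symm⟩
  have rel7 : ∏ k, ∏ l, (ε l + ε k)
      = 2 ^ d * ((∏ l, ε l) * ∏ l, ∏ m0 ∈ Finset.univ.erase l, (ε l + ε m0)) := by
    have ha : ∀ k : Fin d, ∏ l, (ε l + ε k) = 2 * ε k * ∏ l ∈ Finset.univ.erase k, (ε l + ε k) := by
      intro k
      rw [← Finset.mul_prod_erase Finset.univ (fun l => ε l + ε k) (Finset.mem_univ k)]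
      ring
    rw [Finset.prod_congr rfl (fun k (_ : k ∈ Finset.univ) => ha k)]
    simp only [Finset.prod_mul_distrib, Finset.prod_const, Finset.card_univ, Fintype.card_fin]
    have hb : ∏ k, ∏ l ∈ Finset.univ.erase k, (ε l + ε k)
        = ∏ l, ∏ m0 ∈ Finset.univ.erase l, (ε l + ε m0) := by
      refine Finset.prod_comm' (s := Finset.univ) (t := fun k => Finset.univ.erase k)
        (t' := Finset.univ) (s' := fun y => Finset.univ.erase y) fun x y => ?_
      simp only [Finset.mem_univ, Finset.mem_erase, and_true, true_and]
      exact ⟨fun h => h.symm, fun h => h.symm⟩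
    rw [hb]
    ring
  -- more nonvanishing
  have hPB : (∏ j, ∏ l, (ε l - zh j)) ≠ 0 :=
    Finset.prod_ne_zero_iff.mpr fun j _ => hBj j
  have hPE : (∏ k, ∏ l, (ε l + ε k)) ≠ 0 :=
    Finset.prod_ne_zero_iff.mpr fun k _ => Finset.prod_ne_zero_iff.mpr fun l _ =>
      ne_of_gt (add_pos (hεpos l) (hεpos k))
  have hPϱ : (∏ l, ϱ l) ≠ 0 := Finset.prod_ne_zero_iff.mpr fun l _ => ne_of_gt (hϱ l)
  have hEm : (∏ l, ∏ m0 ∈ Finset.univ.erase l, (ε l - ε m0)) ≠ 0 :=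
    Finset.prod_ne_zero_iff.mpr fun l _ => Finset.prod_ne_zero_iff.mpr fun m0 hm =>
      sub_ne_zero_of_ne fun h => (Finset.ne_of_mem_erase hm) (hεinj h).symm
  have hEp : (∏ l, ∏ m0 ∈ Finset.univ.erase l, (ε l + ε m0)) ≠ 0 :=
    Finset.prod_ne_zero_iff.mpr fun l _ => Finset.prod_ne_zero_iff.mpr fun m0 _ =>
      ne_of_gt (add_pos (hεpos l) (hεpos m0))
  have hcd : (c : ℝ) ^ d ≠ 0 := pow_ne_zero _ hc0
  have h2d : (2 : ℝ) ^ d ≠ 0 := pow_ne_zero _ two_ne_zero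
  -- the two sides of the cleared identity
  have StepL : (R z - R (-z)) * ((∏ j, (R z - R (-zh j))) * ∏ k, (R z - R (ε k)))
      = 2 * z * (m1 ^ d * ((∏ j, (z + zh j)) ^ 2 * ∏ j, ∏ m0, (zh j + zh m0)))
        / ∏ k, ∏ l, (ε l + ε k) := by
    rw [q1, Finset.prod_congr rfl (fun j (_ : j ∈ Finset.univ) => q2 j),
      Finset.prod_congr rfl (fun k (_ : k ∈ Finset.univ) => q3 k)]
    simp only [Finset.prod_div_distrib, Finset.prod_mul_distrib, Finset.prod_const,
      Finset.card_univ, Fintype.card_fin]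
    rw [show ∏ k, ∏ j, (ε k - zh j) = ∏ j, ∏ l, (ε l - zh j) from Finset.prod_comm,
      show ∏ k, (z - ε k) = m1 * ∏ l, (ε l - z) from by
        rw [Finset.prod_congr rfl
          (fun k (_ : k ∈ Finset.univ) => show z - ε k = -(ε k - z) from by ring), prodneg]]
    field_simp [hGp, hPB, hPE, hm1ne]
    linear_combination ((∏ j, (z + zh j)) ^ 2 * (∏ j, ∏ m0, (zh j + zh m0))) * hm1
  have rel5' : (∏ l, (ε l + z)) * (m1 ^ d * ∏ j, ∏ l, (ε l + zh j))
      = c ^ d * ((∏ l, ϱ l) * ∏ l, ∏ m0 ∈ Finset.univ.erase l, (ε l - ε m0)) := by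
    have h := rel5
    rw [show ∏ l, ∏ j, (ε l + zh j) = ∏ j, ∏ l, (ε l + zh j) from Finset.prod_comm,
      rel6] at h
    exact h
  have StepR : 2 * (R z - R 0) * ∏ k, (R z - R (α k)) ^ 2
      = 2 * z * (m1 ^ d * ((∏ j, (z + zh j)) ^ 2 * ∏ j, ∏ m0, (zh j + zh m0)))
        / ∏ k, ∏ l, (ε l + ε k) := by
    rw [q4, Finset.prod_congr rfl (fun k (_ : k ∈ Finset.univ) => q5 k)]
    simp only [Finset.prod_div_distrib, Finset.prod_mul_distrib]
    rw [v1,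
      show ∏ k, ∏ j, (zh j ^ 2 - α k ^ 2) = ∏ j, ∏ k, (zh j ^ 2 - α k ^ 2) from
        Finset.prod_comm,
      show ∏ k, ∏ l, (ε l ^ 2 - α k ^ 2) = ∏ l, ∏ k, (ε l ^ 2 - α k ^ 2) from
        Finset.prod_comm,
      rel4, rel7]
    field_simp [hPε, hm1ne, hcd, hPϱ, hEm, hEp, h2d]
    linear_combination ((∏ l, (ε l + z)) * (∏ j, (z + zh j))) * rel2
      + ((∏ j, (z + zh j)) ^ 2 * (∏ j, ∏ m0, (zh j + zh m0)) * m1 ^ d) * rel5'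
      - ((∏ j, (z + zh j)) ^ 2 * (∏ j, ∏ m0, (zh j + zh m0)) * (∏ l, (ε l + z))
        * (∏ j, ∏ l, (ε l + zh j))) * hm1d
  have T1 : (R z - R (-z)) * ((∏ j, (R z - R (-zh j))) * ∏ k, (R z - R (ε k)))
      = 2 * (R z - R 0) * ∏ k, (R z - R (α k)) ^ 2 := StepL.trans StepR.symm
  have hPV : (∏ k, (R z - R (ε k))) ≠ 0 :=
    Finset.prod_ne_zero_iff.mpr fun k _ => sub_ne_zero_of_ne (hV k)
  rw [Finset.prod_div_distrib, Finset.prod_div_distrib,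
    show ∏ k, (R z - R (ε k)) ^ 2 = (∏ k, (R z - R (ε k))) ^ 2 from by rw [Finset.prod_pow]]
  field_simp [hD, hPV]
  linear_combination T1
end

section
/- Suppose the holomorphic function $\mathcal{G}^{(0)}(z,w)$ satisfies, for $(z,w)$ in a product domain, the equation $(R(w) - R(-z))\,\mathcal{G}^{(0)}(z,w) = 1 + \frac{\lambda}{N}\sum_{k=1}^d r_k \frac{\mathcal{G}^{(0)}(\varepsilon_k, w)}{R(\varepsilon_k) - R(z)}$, and that for each fixed $w$ and each $l = 1,\dots,d$, the substitution $z = -\hat w^l$ is admissible with $\mathcal{G}^{(0)}(-\hat w^l, w)$ finite and $R(-\hat w^l) \neq \infty$, where $R(\hat w^l) = R(w)$. If moreover the $2d$ values $R(-\hat w^1),\dots,R(-\hat w^d), R(\varepsilon_1),\dots,R(\varepsilon_d)$ are pairwise distinct, then for each $k$: $\frac{\lambda}{N} r_k\, \mathcal{G}^{(0)}(\varepsilon_k, w) = -\frac{\prod_{j=1}^d (R(\varepsilon_k) - R(-\hat w^j))}{\prod_{j=1, j\neq k}^d (R(\varepsilon_k) - R(\varepsilon_j))}$. -/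
/-!
At `z = -ŵˡ` the left-hand side vanishes, so the unknowns `xₖ = (λ/N) rₖ 𝒢(εₖ,w)` solve the Cauchy
system `∑ₖ xₖ / (bₖ - aₗ) = -1` with `aₗ = R(-ŵˡ)`, `bₖ = R(εₖ)`. Let `P` be the polynomial of degree
`< d` taking the value `xₖ ∏_{j≠k} (bₖ - bⱼ)` at `bₖ`. By the barycentric form of Lagrange
interpolation the system says exactly that `P(aₗ) = ∏ⱼ (aₗ - bⱼ)`, which is also the value at `aₗ` of
`∏ⱼ (X - bⱼ) - ∏ⱼ (X - aⱼ)`, another polynomial of degree `< d`. Agreeing at the `d` points `aₗ`, the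
two polynomials coincide, and evaluating at `bₖ` gives the formula.
-/

open Finset Polynomial Lagrange

theorem Lagrange.degree_nodal_sub_nodal_lt {R ι : Type*} [CommRing R] [Nontrivial R]
    (s : Finset ι) (a b : ι → R) : (nodal s b - nodal s a).degree < #s := by
  have hdeg : (nodal s b).degree = (nodal s a).degree := by rw [degree_nodal, degree_nodal]
  simpa only [degree_nodal] using
    degree_sub_lt_left hdeg nodal_ne_zero (by rw [nodal_monic.leadingCoeff, nodal_monic.leadingCoeff])

theorem eq_neg_prod_div_prod_of_sum_div_sub_eq_neg_one {F ι : Type*} [Field F] [Fintype ι]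
    [DecidableEq ι] {a b x : ι → F} (ha : Function.Injective a) (hb : Function.Injective b)
    (hab : ∀ i j, b i ≠ a j) (hx : ∀ l, ∑ i, x i / (b i - a l) = -1) (k : ι) :
    x k = -(∏ j, (b k - a j)) / ∏ j ∈ univ.erase k, (b k - b j) := by
  have hprod_ne : ∀ i, ∏ j ∈ univ.erase i, (b i - b j) ≠ 0 := fun i =>
    prod_ne_zero_iff.mpr fun j hj => sub_ne_zero.mpr (hb.ne (mem_erase.mp hj).1.symm)
  set y : ι → F := fun i => x i * ∏ j ∈ univ.erase i, (b i - b j)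
  have hweight : ∀ i, nodalWeight univ b i * y i = x i := fun i => by
    rw [nodalWeight, prod_inv_distrib, mul_left_comm, inv_mul_cancel₀ (hprod_ne i), mul_one]
  have hinterp : interpolate univ b y = nodal univ b - nodal univ a := by
    refine eq_of_degrees_lt_of_eval_index_eq univ ha.injOn
      (degree_interpolate_lt _ hb.injOn) (degree_nodal_sub_nodal_lt _ _ _) fun l _ => ?_
    have hsum : ∑ i, nodalWeight univ b i * (a l - b i)⁻¹ * y i = 1 := by
      calc ∑ i, nodalWeight univ b i * (a l - b i)⁻¹ * y i = -∑ i, x i / (b i - a l) := by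
            rw [← sum_neg_distrib]
            refine sum_congr rfl fun i _ => ?_
            rw [mul_right_comm, hweight, ← neg_sub, inv_neg, div_eq_mul_inv, mul_neg]
        _ = 1 := by rw [hx l, neg_neg]
    rw [eval_interpolate_not_at_node y fun i _ => (hab i l).symm, hsum, eval_sub,
      eval_nodal_at_node (mem_univ l), mul_one, sub_zero]
  have hyk : y k = -∏ j, (b k - a j) := by
    rw [← eval_interpolate_at_node y hb.injOn (mem_univ k), hinterp, eval_sub,
      eval_nodal_at_node (mem_univ k), eval_nodal, zero_sub]
  exact eq_div_of_mul_eq (hprod_ne k) hyk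

theorem cauchy_inversion_for_G_general (d : ℕ) (lam N : ℝ) (r : Fin d → ℝ)
    (R : ℂ → ℂ) (ε : Fin d → ℂ) (G : ℂ → ℂ → ℂ) (w : ℂ) (wh : Fin d → ℂ)
    (hwh : ∀ l, R (wh l) = R w)
    (heq : ∀ l, (R w - R (wh l)) * G (-wh l) w
      = 1 + (lam : ℂ) / (N : ℂ) * ∑ k, (r k : ℂ) * G (ε k) w / (R (ε k) - R (-wh l)))
    (hdist : Function.Injective
      (Sum.elim (fun j => R (-wh j)) (fun i => R (ε i)) : Fin d ⊕ Fin d → ℂ)) :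
    ∀ k, (lam : ℂ) / (N : ℂ) * (r k : ℂ) * G (ε k) w
      = -(∏ j, (R (ε k) - R (-wh j))) / ∏ j ∈ univ.erase k, (R (ε k) - R (ε j)) := by
  obtain ⟨hwh_inj, hε_inj, hdisjoint⟩ := Sum.elim_injective.mp hdist
  refine eq_neg_prod_div_prod_of_sum_div_sub_eq_neg_one hwh_inj hε_inj
    (fun i j => (hdisjoint j i).symm) fun l => ?_
  have hsystem := heq l
  rw [hwh l, sub_self, zero_mul] at hsystem
  simp only [mul_assoc, mul_div_assoc, ← mul_sum] at hsystem ⊢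
  linear_combination -hsystem

/-- Solving the functional equation at the special points `z = -ŵˡ`: if
`(R(w)-R(-z))𝒢(z,w) = 1 + (λ/N)∑ₖ rₖ 𝒢(εₖ,w)/(R(εₖ)-R(z))` holds at
`z = -ŵˡ` for `l = 1,…,d`, where `R(ŵˡ) = R(w)`, and the `2d` values
`R(-ŵ¹),…,R(-ŵ^d), R(ε₁),…,R(ε_d)` are pairwise distinct, then
`(λ/N) rₖ 𝒢(εₖ,w) = -∏ⱼ(R(εₖ)-R(-ŵʲ)) / ∏_{j≠k}(R(εₖ)-R(εⱼ))`. -/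
theorem cauchy_inversion_for_G (d : ℕ) (lam N : ℝ) (hlam : 0 < lam)
    (hN : 0 < N) (r : Fin d → ℝ) (hr : ∀ k, 0 < r k)
    (R : ℂ → ℂ) (ε : Fin d → ℂ) (G : ℂ → ℂ → ℂ) (w : ℂ) (wh : Fin d → ℂ)
    (hwh : ∀ l, R (wh l) = R w)
    (heq : ∀ l, (R w - R (wh l)) * G (-wh l) w
      = 1 + (lam : ℂ) / (N : ℂ) * ∑ k, (r k : ℂ) * G (ε k) w / (R (ε k) - R (-wh l)))
    (hdist : Function.Injective
      (Sum.elim (fun j => R (-wh j)) (fun i => R (ε i)) : Fin d ⊕ Fin d → ℂ)) :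
    ∀ k, (lam : ℂ) / (N : ℂ) * (r k : ℂ) * G (ε k) w
      = -(∏ j, (R (ε k) - R (-wh j))) / ∏ j ∈ univ.erase k, (R (ε k) - R (ε j)) :=
  cauchy_inversion_for_G_general d lam N r R ε G w wh hwh heq hdist
end

section
/- Under the hypotheses of the previous setting (the functional equation $(R(w)-R(-z))\mathcal{G}^{(0)}(z,w) = 1 + \frac{\lambda}{N}\sum_{k=1}^d r_k \frac{\mathcal{G}^{(0)}(\varepsilon_k,w)}{R(\varepsilon_k)-R(z)}$ together with $\frac{\lambda}{N} r_k \mathcal{G}^{(0)}(\varepsilon_k,w) = -\prod_{j=1}^d (R(\varepsilon_k)-R(-\hat w^j)) / \prod_{j\neq k} (R(\varepsilon_k)-R(\varepsilon_j))$), one has the closed formula $\mathcal{G}^{(0)}(z,w) = \frac{1}{R(w)-R(-z)}\prod_{j=1}^d \frac{R(z)-R(-\hat w^j)}{R(z)-R(\varepsilon_j)}$, provided $R(z), R(\varepsilon_1),\dots,R(\varepsilon_d), R(-\hat w^1),\dots,R(-\hat w^d)$ are such that all denominators are nonzero and the values $R(z), R(\varepsilon_1),\dots,R(\varepsilon_d)$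 are pairwise distinct. -/
open Finset Polynomial

/-- Leading coefficient of the Lagrange basis polynomial. -/
lemma leadingCoeff_lagrange_basis {F : Type*} [Field F] {ι : Type*} [DecidableEq ι]
    (s : Finset ι) (v : ι → F) (i : ι) :
    (Lagrange.basis s v i).leadingCoeff = ∏ j ∈ s.erase i, (v i - v j)⁻¹ := by
  rw [Lagrange.basis]
  rw [leadingCoeff_prod]
  refine Finset.prod_congr rfl fun j _ => ?_
  rw [Lagrange.basisDivisor, leadingCoeff_mul, leadingCoeff_C,
    (monic_X_sub_C (v j)).leadingCoeff, mul_one]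

/-- Key partial-fraction / Lagrange identity: for pairwise distinct `b k` and any `a j`,
`∑ k, ∏ j (b k - a j) / ∏_{j ≠ k} (b k - b j) = 1`. -/
lemma lagrange_sum_eq_one {F : Type*} [Field F] {d : ℕ}
    (b : Fin (d + 1) → F) (hb : Function.Injective b) (a : Fin d → F) :
    ∑ k, (∏ j, (b k - a j)) * (∏ j ∈ univ.erase k, (b k - b j))⁻¹ = 1 := by
  classical
  set P : F[X] := ∏ j, (X - C (a j)) with hP
  have hPm : P.Monic := monic_prod_of_monic _ _ fun j _ => monic_X_sub_C _
  have hPdeg : P.natDegree = d := by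
    rw [hP, natDegree_prod_of_monic _ _ fun j _ => monic_X_sub_C _]
    simp
  have hcard : (univ : Finset (Fin (d + 1))).card = d + 1 := by simp
  have hdeg : P.degree < ((univ : Finset (Fin (d + 1))).card : ℕ) := by
    rw [hcard]
    calc P.degree ≤ P.natDegree := degree_le_natDegree
    _ < (d + 1 : ℕ) := by exact_mod_cast by omega
  have hvs : Set.InjOn b (univ : Finset (Fin (d + 1))) := hb.injOn
  have hip := Lagrange.eq_interpolate (f := P) hvs hdeg
  have hco := congrArg (fun q : F[X] => q.coeff d) hip
  rw [Lagrange.interpolate_apply, finset_sum_coeff] at hco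
  have hPco : P.coeff d = 1 := by
    have := hPm.leadingCoeff
    rwa [leadingCoeff, hPdeg] at this
  rw [hPco] at hco
  have hterms : ∀ k : Fin (d + 1), (C (eval (b k) P) * Lagrange.basis univ b k).coeff d
      = (∏ j, (b k - a j)) * (∏ j ∈ univ.erase k, (b k - b j))⁻¹ := by
    intro k
    rw [coeff_C_mul]
    have hbd : (Lagrange.basis univ b k).natDegree = d := by
      rw [Lagrange.natDegree_basis hvs (mem_univ k), hcard]; omega
    have hb1 : (Lagrange.basis univ b k).coeff d = ∏ j ∈ univ.erase k, (b k - b j)⁻¹ := by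
      rw [← leadingCoeff_lagrange_basis univ b k, leadingCoeff, hbd]
    rw [hb1, Finset.prod_inv_distrib, hP]
    simp [eval_prod]
  rw [show (∑ k, (∏ j, (b k - a j)) * (∏ j ∈ univ.erase k, (b k - b j))⁻¹)
      = ∑ k, (C (eval (b k) P) * Lagrange.basis univ b k).coeff d from
    Finset.sum_congr rfl fun k _ => (hterms k).symm]
  exact hco.symm

/-- The closed formula for the planar two-point function: from the functional
equation `(R(w)-R(-z))𝒢(z,w) = 1 + (λ/N)∑ₖ rₖ 𝒢(εₖ,w)/(R(εₖ)-R(z))` and the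
values `(λ/N)rₖ𝒢(εₖ,w) = -∏ⱼ(R(εₖ)-R(-ŵʲ))/∏_{j≠k}(R(εₖ)-R(εⱼ))` one deduces
`𝒢(z,w) = (1/(R(w)-R(-z))) ∏ⱼ (R(z)-R(-ŵʲ))/(R(z)-R(εⱼ))`. -/
theorem closed_formula_for_G (d : ℕ) (lam N : ℝ) (hlam : 0 < lam)
    (hN : 0 < N) (r : Fin d → ℝ) (hr : ∀ k, 0 < r k)
    (R : ℂ → ℂ) (ε : Fin d → ℂ) (G : ℂ → ℂ → ℂ) (z w : ℂ) (wh : Fin d → ℂ)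
    (heqz : (R w - R (-z)) * G z w
      = 1 + (lam : ℂ) / (N : ℂ) * ∑ k, (r k : ℂ) * G (ε k) w / (R (ε k) - R z))
    (hG : ∀ k, (lam : ℂ) / (N : ℂ) * (r k : ℂ) * G (ε k) w
      = -(∏ j, (R (ε k) - R (-wh j))) / ∏ j ∈ univ.erase k, (R (ε k) - R (ε j)))
    -- the values R(z), R(ε₁), …, R(ε_d) are pairwise distinct
    (hdist : Function.Injective
      (Fin.cons (R z) (fun k => R (ε k)) : Fin (d + 1) → ℂ))
    (hzw : R w - R (-z) ≠ 0) :
    G z w = 1 / (R w - R (-z)) * ∏ j, (R z - R (-wh j)) / (R z - R (ε j)) := by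
  classical
  set b : Fin (d + 1) → ℂ := Fin.cons (R z) (fun k => R (ε k)) with hbdef
  have key := lagrange_sum_eq_one b hdist (fun j => R (-wh j))
  -- split the sum at 0
  rw [Fin.sum_univ_succ] at key
  -- rewrite the erase products
  have herase0 : (univ : Finset (Fin (d + 1))).erase 0
      = univ.map ⟨Fin.succ, Fin.succ_injective d⟩ := by
    rw [Fin.univ_succ, Finset.erase_cons]
  have hb0 : b 0 = R z := rfl
  have hbS : ∀ k : Fin d, b k.succ = R (ε k) := fun k => rfl
  have heraseS : ∀ k : Fin d, (∏ j ∈ univ.erase k.succ, (R (ε k) - b j))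
      = (R (ε k) - R z) * ∏ j ∈ univ.erase k, (R (ε k) - R (ε j)) := by
    intro k
    rw [Fin.univ_succ, Finset.erase_cons_of_ne _ ((Fin.succ_ne_zero k).symm),
      Finset.prod_cons,
      show ((univ.map ⟨Fin.succ, Fin.succ_injective d⟩).erase k.succ)
          = (univ.erase k).map ⟨Fin.succ, Fin.succ_injective d⟩ from
        (Finset.map_erase ⟨Fin.succ, Fin.succ_injective d⟩ univ k).symm,
      Finset.prod_map]
    simp only [Function.Embedding.coeFn_mk, hb0, hbS]
  rw [herase0] at key
  simp only [Finset.prod_map, Function.Embedding.coeFn_mk, hb0, hbS] at key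
  have key2 : (∏ j, (R z - R (-wh j))) * (∏ j, (R z - R (ε j)))⁻¹
      + ∑ k : Fin d, (∏ j, (R (ε k) - R (-wh j)))
        * ((R (ε k) - R z) * ∏ j ∈ univ.erase k, (R (ε k) - R (ε j)))⁻¹ = 1 := by
    rw [← key]
    congr 1
    refine Finset.sum_congr rfl fun k _ => ?_
    rw [heraseS k]
  -- nonzeroness facts
  have hze : ∀ j, R z - R (ε j) ≠ 0 := by
    intro j
    have : b 0 ≠ b j.succ := fun h => (Fin.succ_ne_zero j) (hdist h).symm
    rw [hb0, hbS] at this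
    exact sub_ne_zero_of_ne this
  have hek : ∀ k j : Fin d, k ≠ j → R (ε k) - R (ε j) ≠ 0 := by
    intro k j hkj
    have : b k.succ ≠ b j.succ := fun h => hkj (Fin.succ_injective d (hdist h))
    rw [hbS, hbS] at this
    exact sub_ne_zero_of_ne this
  -- rewrite heqz using hG
  have hsum : (lam : ℂ) / (N : ℂ) * ∑ k, (r k : ℂ) * G (ε k) w / (R (ε k) - R z)
      = ∑ k : Fin d, -((∏ j, (R (ε k) - R (-wh j)))
        * ((R (ε k) - R z) * ∏ j ∈ univ.erase k, (R (ε k) - R (ε j)))⁻¹) := by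
    rw [Finset.mul_sum]
    refine Finset.sum_congr rfl fun k _ => ?_
    have h1 : (lam : ℂ) / N * ((r k : ℂ) * G (ε k) w / (R (ε k) - R z))
        = ((lam : ℂ) / N * (r k : ℂ) * G (ε k) w) / (R (ε k) - R z) := by ring
    rw [h1, hG k, div_div,
      mul_comm (∏ j ∈ univ.erase k, (R (ε k) - R (ε j))) (R (ε k) - R z),
      neg_div, div_eq_mul_inv]
  rw [hsum] at heqz
  have hsum2 : ∑ k : Fin d, -((∏ j, (R (ε k) - R (-wh j)))
        * ((R (ε k) - R z) * ∏ j ∈ univ.erase k, (R (ε k) - R (ε j)))⁻¹)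
      = (∏ j, (R z - R (-wh j))) * (∏ j, (R z - R (ε j)))⁻¹ - 1 := by
    rw [Finset.sum_neg_distrib]
    have := key2
    linear_combination -this
  rw [hsum2] at heqz
  have heq3 : (R w - R (-z)) * G z w
      = (∏ j, (R z - R (-wh j))) * (∏ j, (R z - R (ε j)))⁻¹ := by
    rw [heqz]; ring
  have hprod : ∏ j, (R z - R (-wh j)) / (R z - R (ε j))
      = (∏ j, (R z - R (-wh j))) * (∏ j, (R z - R (ε j)))⁻¹ := by
    rw [Finset.prod_div_distrib, div_eq_mul_inv]
  rw [hprod, ← heq3, one_div, inv_mul_cancel_left₀ hzw]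
end
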